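/- arXiv:1701.03990 — 4 statements merged into one kernel-verified Lean document; each statement's English description precedes it below -/
import Mathlib

section
/- Let F be a finite field, let n ≥ 2 and d ≥ 2 be integers, and let k₁, k₂ ≥ 0 be integers. Then card R_{k₁+k₂}(n,d;F) ≥ card R''_{k₁}(n,d−1;F) · card R''_{k₂}(n−1,d;F). -/
/-!
Write `e` for the last basis vector of `ℕⁿ`. Given `z₁ = Σ yᵢ xᵢ^j` with all `xᵢ` having nonzero
last coordinate, the vector `Σ (yᵢ / xᵢₙ) xᵢ^j` of degree `d` has `z₁` as its shift `j ↦ z_{j+e}`.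
Given `z₂ = Σ y'ᵢ x'ᵢ^j` in `n - 1` variables, appending a zero coordinate to every `x'ᵢ` gives a
vector of degree `d` whose shift vanishes and whose restriction to `j_n = 0` is `z₂`. The sum
of the two lies in `R_{k₁+k₂}(n,d)`, and `(z₁, z₂)` is recovered from it: `z₁` as its shift, and
then `z₂` from its restriction to `j_n = 0`.
-/

/-- `R_k(n,d;K)`: the set of `z ∈ K^{𝒥(n,d)}` (where `𝒥(n,d) = {j ∈ ℕⁿ : j₁+⋯+jₙ ≤ d}`)
such that `z_j = Σ_{i=1}^k y_i x_i^j` for some `x₁,…,x_k ∈ Kⁿ`, `y₁,…,y_k ∈ K`. -/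
def Rset (K : Type*) [Field K] (n d k : ℕ) :
    Set ({j : Fin n → ℕ // ∑ i, j i ≤ d} → K) :=
  {z | ∃ (x : Fin k → Fin n → K) (y : Fin k → K),
    ∀ j, z j = ∑ i, y i * ∏ t, x i t ^ j.1 t}

/-- `R''_k(n,d;K)`: as `R_k(n,d;K)` but requiring every coordinate of every `x_i` to be
nonzero. -/
def RsetNZ (K : Type*) [Field K] (n d k : ℕ) :
    Set ({j : Fin n → ℕ // ∑ i, j i ≤ d} → K) :=
  {z | ∃ (x : Fin k → Fin n → K) (y : Fin k → K),
    (∀ i t, x i t ≠ 0) ∧ ∀ j, z j = ∑ i, y i * ∏ t, x i t ^ j.1 t}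

open Finset Function

local notation "𝒥(" n ", " d ")" => {j : Fin n → ℕ // ∑ i, j i ≤ d}

instance (n d : ℕ) : Finite 𝒥(n, d) :=
  ((Set.finite_Iic fun _ : Fin n => d).subset fun _ hj i =>
    (single_le_sum (fun _ _ => Nat.zero_le _) (mem_univ i)).trans hj).to_subtype

theorem prod_pow_add_single {ι M : Type*} [Fintype ι] [DecidableEq ι] [CommMonoid M]
    (x : ι → M) (j : ι → ℕ) (a : ι) :
    ∏ t, x t ^ (j + Pi.single a 1 : ι → ℕ) t = (∏ t, x t ^ j t) * x a := by
  simp only [Pi.add_apply, pow_add, prod_mul_distrib]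
  simp [Pi.single_apply, pow_ite]

theorem prod_snoc_pow_snoc {M : Type*} [CommMonoid M] {n : ℕ} (x : Fin n → M) (c : M)
    (j : Fin n → ℕ) (e : ℕ) :
    ∏ t, (Fin.snoc x c : Fin (n + 1) → M) t ^ (Fin.snoc j e : Fin (n + 1) → ℕ) t
      = (∏ t, x t ^ j t) * c ^ e := by
  simp [Fin.prod_univ_castSucc]

def bumpLast {n d : ℕ} (j : 𝒥(n + 1, d)) : 𝒥(n + 1, d + 1) :=
  ⟨j.1 + Pi.single (Fin.last n) 1, by simpa [sum_add_distrib] using j.2⟩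

def extendZero {n d : ℕ} (j : 𝒥(n, d)) : 𝒥(n + 1, d) :=
  ⟨Fin.snoc j.1 0, by simpa [Fin.sum_univ_castSucc] using j.2⟩

section

variable {K : Type*} [Field K] {n d k k' : ℕ}

theorem rsetNZ_subset_rset : RsetNZ K n d k ⊆ Rset K n d k :=
  fun _ ⟨x, y, _, h⟩ => ⟨x, y, h⟩

theorem add_mem_rset {z z' : 𝒥(n, d) → K} (hz : z ∈ Rset K n d k) (hz' : z' ∈ Rset K n d k') :
    z + z' ∈ Rset K n d (k + k') := by
  obtain ⟨x, y, h⟩ := hz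
  obtain ⟨x', y', h'⟩ := hz'
  exact ⟨Fin.append x x', Fin.append y y', fun j => by simp [h, h', Fin.sum_univ_add]⟩

theorem exists_mem_rset_bumpLast {z : 𝒥(n + 1, d) → K} (hz : z ∈ RsetNZ K (n + 1) d k) :
    ∃ w ∈ Rset K (n + 1) (d + 1) k, ∀ j, w (bumpLast j) = z j := by
  obtain ⟨x, y, hx, h⟩ := hz
  refine ⟨_, ⟨x, fun i => y i / x i (Fin.last n), fun _ => rfl⟩, fun j => ?_⟩
  rw [h]
  refine sum_congr rfl fun i _ => ?_
  rw [bumpLast, prod_pow_add_single, mul_comm _ (x i _), ← mul_assoc, div_mul_cancel₀ _ (hx i _)]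

theorem exists_mem_rset_extendZero {z : 𝒥(n, d + 1) → K} (hz : z ∈ Rset K n (d + 1) k) :
    ∃ w ∈ Rset K (n + 1) (d + 1) k,
      (∀ j, w (bumpLast j) = 0) ∧ ∀ j, w (extendZero j) = z j := by
  obtain ⟨x, y, h⟩ := hz
  refine ⟨_, ⟨fun i => Fin.snoc (x i) 0, y, fun _ => rfl⟩, fun j => ?_, fun j => ?_⟩
  · refine sum_eq_zero fun i _ => ?_
    rw [bumpLast, prod_pow_add_single]
    simp
  · simp [extendZero, h, prod_snoc_pow_snoc]

end

theorem exists_injective_rsetNZ_prod_rset (K : Type*) [Field K] (n d k₁ k₂ : ℕ) :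
    ∃ f : RsetNZ K (n + 1) d k₁ × Rset K n (d + 1) k₂ → Rset K (n + 1) (d + 1) (k₁ + k₂),
      Injective f := by
  choose lift hlift_mem hlift using fun z : RsetNZ K (n + 1) d k₁ => exists_mem_rset_bumpLast z.2
  choose extend hext_mem hext_bump hext using
    fun z : Rset K n (d + 1) k₂ => exists_mem_rset_extendZero z.2
  refine ⟨fun p => ⟨lift p.1 + extend p.2, add_mem_rset (hlift_mem _) (hext_mem _)⟩, ?_⟩
  rintro ⟨a₁, a₂⟩ ⟨b₁, b₂⟩ h
  have h : lift a₁ + extend a₂ = lift b₁ + extend b₂ := congrArg Subtype.val h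
  obtain rfl : a₁ = b₁ := Subtype.ext <| funext fun j => by
    simpa [hlift, hext_bump] using congrFun h (bumpLast j)
  obtain rfl : a₂ = b₂ := Subtype.ext <| funext fun j => by
    simpa [hext] using congrFun (add_left_cancel h) (extendZero j)
  rfl

/-- Let `F` be a finite field, `n ≥ 2`, `d ≥ 2`, and `k₁, k₂ ≥ 0`. Then
`card R_{k₁+k₂}(n,d;F) ≥ card R''_{k₁}(n,d-1;F) · card R''_{k₂}(n-1,d;F)`. -/
theorem stmt_1 (F : Type*) [Field F] [Fintype F] (n d : ℕ) (hn : 2 ≤ n) (hd : 2 ≤ d)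
    (k₁ k₂ : ℕ) :
    Nat.card (RsetNZ F n (d - 1) k₁) * Nat.card (RsetNZ F (n - 1) d k₂)
      ≤ Nat.card (Rset F n d (k₁ + k₂)) := by
  obtain ⟨n, rfl⟩ : ∃ m, n = m + 1 := ⟨n - 1, by omega⟩
  obtain ⟨d, rfl⟩ : ∃ e, d = e + 1 := ⟨d - 1, by omega⟩
  obtain ⟨f, hf⟩ := exists_injective_rsetNZ_prod_rset F n d k₁ k₂
  simp only [Nat.add_one_sub_one]
  calc Nat.card (RsetNZ F (n + 1) d k₁) * Nat.card (RsetNZ F n (d + 1) k₂)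
      ≤ Nat.card (RsetNZ F (n + 1) d k₁) * Nat.card (Rset F n (d + 1) k₂) :=
        Nat.mul_le_mul_left _ (Nat.card_mono (Set.toFinite _) rsetNZ_subset_rset)
    _ = Nat.card (RsetNZ F (n + 1) d k₁ × Rset F n (d + 1) k₂) := Nat.card_prod _ _ |>.symm
    _ ≤ _ := Nat.card_le_card_of_injective f hf
end

section
/- Let n be a positive integer, r > 0, and let S ⊆ ℝⁿ be a measurable set of positive Lebesgue measure contained in the closed ball of radius r centered at 0. Suppose U ⊆ ℝⁿ has the property that for all c, c' ∈ U with c ≠ c', ∫_S e^{2πi (c−c')·z} dz = 0. Then for all c, c' ∈ U with c ≠ c' one has ‖c − c'‖ ≥ 1/(4r); in particular U is a discrete (and hence countable) subset of ℝⁿ. -/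
open MeasureTheory Real
open scoped RealInnerProductSpace

/-!
If `‖c - c'‖ < 1/(4r)`, then for every `z` in the ball of radius `r` the phase
`2π ⟪c - c', z⟫` lies in `(-π/2, π/2)`, so the real part `cos (2π ⟪c - c', z⟫)` of the integrand
is bounded below by a positive constant on `S`; as `S` has positive finite measure, the real
part of the integral is positive, hence the integral is not zero. So distinct points of `U`
are `1/(4r)`-separated, and the disjoint open balls of radius `1/(8r)` around them make `U`
countable in the separable space `ℝⁿ`.
-/

theorem Set.countable_of_pairwise_le_dist {X : Type*} [PseudoMetricSpace X]
    [TopologicalSpace.SeparableSpace X] {s : Set X} {ε : ℝ} (hε : 0 < ε)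
    (hs : s.Pairwise fun x y => ε ≤ dist x y) : s.Countable := by
  have hdisj : s.PairwiseDisjoint fun x => Metric.ball x (ε / 2) := fun x hx y hy hxy =>
    Metric.ball_disjoint_ball (by linarith [hs hx hy hxy])
  exact hdisj.countable_of_isOpen (fun _ _ => Metric.isOpen_ball)
    fun _ _ => Metric.nonempty_ball.2 (half_pos hε)

section FourierPhase

variable {E : Type*} [NormedAddCommGroup E] [InnerProductSpace ℝ E]

theorem exp_two_pi_I_inner_eq (d z : E) :
    Complex.exp (2 * π * Complex.I * ((⟪d, z⟫ : ℝ) : ℂ)) =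
      Complex.exp (((2 * π * ⟪d, z⟫ : ℝ) : ℂ) * Complex.I) := by
  push_cast
  ring_nf

theorem cos_two_pi_mul_le_cos_two_pi_inner {d z : E} {r : ℝ} (hz : ‖z‖ ≤ r)
    (hdr : ‖d‖ * r ≤ 1 / 2) : cos (2 * π * (‖d‖ * r)) ≤ cos (2 * π * ⟪d, z⟫) := by
  have hinner : |⟪d, z⟫| ≤ ‖d‖ * r :=
    (abs_real_inner_le_norm d z).trans (mul_le_mul_of_nonneg_left hz (norm_nonneg d))
  rw [← cos_abs (2 * π * ⟪d, z⟫), abs_mul, abs_of_pos two_pi_pos]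
  apply cos_le_cos_of_nonneg_of_le_pi (by positivity)
  · nlinarith [pi_pos]
  · exact mul_le_mul_of_nonneg_left hinner two_pi_pos.le

variable [MeasurableSpace E] [BorelSpace E] {μ : Measure E}

theorem integrableOn_exp_two_pi_I_inner (d : E) {S : Set E} (hS : μ S ≠ ⊤) :
    IntegrableOn (fun z => Complex.exp (2 * π * Complex.I * ((⟪d, z⟫ : ℝ) : ℂ))) S μ := by
  refine Measure.integrableOn_of_bounded (M := 1) hS
    (Continuous.aestronglyMeasurable (by fun_prop)) ?_
  filter_upwards with z
  rw [exp_two_pi_I_inner_eq, Complex.norm_exp_ofReal_mul_I]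

theorem re_setIntegral_exp_two_pi_I_inner_pos {S : Set E} (hS : MeasurableSet S)
    (hS₀ : 0 < μ S) (hS_top : μ S ≠ ⊤) {r : ℝ} (hball : S ⊆ Metric.closedBall 0 r) {d : E}
    (hdr : ‖d‖ * r < 1 / 4) :
    0 < (∫ z in S, Complex.exp (2 * π * Complex.I * ((⟪d, z⟫ : ℝ) : ℂ)) ∂μ).re := by
  have hr : 0 ≤ r := by
    obtain ⟨z, hz⟩ := nonempty_of_measure_ne_zero hS₀.ne'
    exact (norm_nonneg z).trans (mem_closedBall_zero_iff.1 (hball hz))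
  have hcos_pos : 0 < cos (2 * π * (‖d‖ * r)) :=
    cos_pos_of_mem_Ioo ⟨by nlinarith [pi_pos, mul_nonneg (norm_nonneg d) hr], by nlinarith [pi_pos]⟩
  have hlower : ∀ z ∈ S, cos (2 * π * (‖d‖ * r)) ≤
      (Complex.exp (2 * π * Complex.I * ((⟪d, z⟫ : ℝ) : ℂ))).re := fun z hz => by
    rw [exp_two_pi_I_inner_eq, Complex.exp_ofReal_mul_I_re]
    exact cos_two_pi_mul_le_cos_two_pi_inner (mem_closedBall_zero_iff.1 (hball hz)) (by linarith)
  have hint := integrableOn_exp_two_pi_I_inner d hS_top (μ := μ)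
  calc 0 < μ.real S * cos (2 * π * (‖d‖ * r)) :=
        mul_pos (ENNReal.toReal_pos hS₀.ne' hS_top) hcos_pos
    _ ≤ ∫ z in S, (Complex.exp (2 * π * Complex.I * ((⟪d, z⟫ : ℝ) : ℂ))).re ∂μ :=
        setIntegral_ge_of_const_le hS hS_top hlower hint.re
    _ = _ := integral_re hint

end FourierPhase

theorem stmt_9_general (n : ℕ) (r : ℝ) (hr : 0 < r)
    (S : Set (EuclideanSpace ℝ (Fin n))) (hmeas : MeasurableSet S)
    (hpos : 0 < volume S) (hball : S ⊆ Metric.closedBall 0 r)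
    (U : Set (EuclideanSpace ℝ (Fin n)))
    (hU : ∀ c ∈ U, ∀ c' ∈ U, c ≠ c' →
      (∫ z in S, Complex.exp (2 * π * Complex.I * ((⟪c - c', z⟫ : ℝ) : ℂ))) = 0) :
    (∀ c ∈ U, ∀ c' ∈ U, c ≠ c' → 1 / (4 * r) ≤ ‖c - c'‖) ∧ U.Countable := by
  have hS_top : volume S ≠ ⊤ := ((measure_mono hball).trans_lt measure_closedBall_lt_top).ne
  have hsep : ∀ c ∈ U, ∀ c' ∈ U, c ≠ c' → 1 / (4 * r) ≤ ‖c - c'‖ := by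
    intro c hc c' hc' hne
    by_contra! hlt
    have hdr : ‖c - c'‖ * r < 1 / 4 := by
      rwa [lt_div_iff₀ (by positivity), mul_comm 4, ← mul_assoc, ← lt_div_iff₀ four_pos] at hlt
    have := re_setIntegral_exp_two_pi_I_inner_pos hmeas hpos hS_top hball hdr
    simp [hU c hc c' hc' hne] at this
  exact ⟨hsep, Set.countable_of_pairwise_le_dist (by positivity) fun c hc c' hc' hne =>
    (hsep c hc c' hc' hne).trans_eq (dist_eq_norm c c').symm⟩

/-- Let `n` be a positive integer, `r > 0`, and `S ⊆ ℝⁿ` a measurable set of positive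
Lebesgue measure contained in the closed ball of radius `r` centered at `0`.  Suppose
`U ⊆ ℝⁿ` is such that for all `c ≠ c'` in `U`, `∫_S e^{2πi (c-c')·z} dz = 0`.  Then any
two distinct points of `U` are at distance at least `1/(4r)`; in particular `U` is
countable. -/
theorem stmt_9 (n : ℕ) (hn : 0 < n) (r : ℝ) (hr : 0 < r)
    (S : Set (EuclideanSpace ℝ (Fin n))) (hmeas : MeasurableSet S)
    (hpos : 0 < volume S) (hball : S ⊆ Metric.closedBall 0 r)
    (U : Set (EuclideanSpace ℝ (Fin n)))
    (hU : ∀ c ∈ U, ∀ c' ∈ U, c ≠ c' →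
      (∫ z in S, Complex.exp (2 * π * Complex.I * ((⟪c - c', z⟫ : ℝ) : ℂ))) = 0) :
    (∀ c ∈ U, ∀ c' ∈ U, c ≠ c' → 1 / (4 * r) ≤ ‖c - c'‖) ∧ U.Countable :=
  stmt_9_general n r hr S hmeas hpos hball U hU
end

section
/- Let H be an inner product space over ℂ, let C be a finite index set, let (φ_c)_{c ∈ C} be a family of unit vectors in H, and let (e_c)_{c ∈ C} be an orthonormal family in H. Then Σ_{c ∈ C} |⟨e_c, φ_c⟩|² ≤ dim span{φ_c : c ∈ C}. In particular, if c is chosen uniformly at random from C, the probability of correctly identifying c by the orthogonal measurement with outcome vectors (e_c), namely (1/|C|) Σ_{c ∈ C} |⟨e_c, φ_c⟩|², is at most dim span{φ_c : c ∈ C} / |C|. -/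
/-! Let `K` be the span of the `φ c` and `P` the orthogonal projection onto `K`. Since `φ c ∈ K` is a
unit vector, `|⟨e c, φ c⟩| = |⟨P (e c), φ c⟩| ≤ ‖P (e c)‖`. Expanding `‖P (e c)‖²` in an
orthonormal basis `(b j)` of `K` and exchanging the sums, `Σ_c ‖P (e c)‖² = Σ_j Σ_c |⟨e c, b j⟩|²`,
and by Bessel's inequality for the orthonormal family `e` each inner sum is at most
`‖b j‖² = 1`, so the total is at most `dim K`. -/

open Module

section Projection

variable {𝕜 E : Type*} [RCLike 𝕜] [NormedAddCommGroup E] [InnerProductSpace 𝕜 E]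

theorem Submodule.norm_inner_le_norm_orthogonalProjectionOnto_mul_norm (K : Submodule 𝕜 E)
    [K.HasOrthogonalProjection] (v : E) (u : K) :
    ‖(inner 𝕜 v (u : E) : 𝕜)‖ ≤ ‖K.orthogonalProjectionOnto v‖ * ‖u‖ := by
  rw [← K.inner_orthogonalProjectionOnto_eq_of_mem_right]
  exact norm_inner_le_norm _ _

theorem OrthonormalBasis.sum_sq_norm_inner_eq_norm_sq_orthogonalProjectionOnto
    {ι : Type*} [Fintype ι] {K : Submodule 𝕜 E} [K.HasOrthogonalProjection]
    (b : OrthonormalBasis ι 𝕜 K) (v : E) :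
    ∑ j, ‖(inner 𝕜 (b j : E) v : 𝕜)‖ ^ 2 = ‖K.orthogonalProjectionOnto v‖ ^ 2 := by
  simp_rw [← K.inner_orthogonalProjectionOnto_eq_of_mem_left]
  exact b.sum_sq_norm_inner_right _

theorem Orthonormal.sum_sq_norm_orthogonalProjectionOnto_le_finrank {ι : Type*} [Fintype ι]
    {e : ι → E} (he : Orthonormal 𝕜 e) (K : Submodule 𝕜 E) [FiniteDimensional 𝕜 K] :
    ∑ i, ‖K.orthogonalProjectionOnto (e i)‖ ^ 2 ≤ finrank 𝕜 K := by
  let b := stdOrthonormalBasis 𝕜 K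
  calc ∑ i, ‖K.orthogonalProjectionOnto (e i)‖ ^ 2
      = ∑ j, ∑ i, ‖(inner 𝕜 (e i) (b j : E) : 𝕜)‖ ^ 2 := by
        simp_rw [← b.sum_sq_norm_inner_eq_norm_sq_orthogonalProjectionOnto, norm_inner_symm]
        exact Finset.sum_comm
    _ ≤ ∑ j, ‖(b j : E)‖ ^ 2 := Finset.sum_le_sum fun j _ => he.sum_inner_products_le _
    _ = finrank 𝕜 K := by simp [← Submodule.coe_norm, b.norm_eq_one]

end Projection

/-- Let `H` be a complex inner product space, `C` a finite index set, `(φ_c)` a family of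
unit vectors and `(e_c)` an orthonormal family in `H`.  Then
`Σ_c |⟨e_c, φ_c⟩|² ≤ dim span {φ_c}`; in particular the success probability
`(1/|C|) Σ_c |⟨e_c, φ_c⟩|²` of identifying a uniformly random `c` by the orthogonal
measurement with outcome vectors `(e_c)` is at most `dim span {φ_c} / |C|`. -/
theorem stmt_14 {H : Type*} [NormedAddCommGroup H] [InnerProductSpace ℂ H]
    (C : Type*) [Fintype C] (φ e : C → H)
    (hφ : ∀ c, ‖φ c‖ = 1) (he : Orthonormal ℂ e) :
    (∑ c, ‖(inner ℂ (e c) (φ c) : ℂ)‖ ^ 2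
        ≤ (Module.finrank ℂ (Submodule.span ℂ (Set.range φ)) : ℝ)) ∧
      (∑ c, ‖(inner ℂ (e c) (φ c) : ℂ)‖ ^ 2) / (Fintype.card C : ℝ)
        ≤ (Module.finrank ℂ (Submodule.span ℂ (Set.range φ)) : ℝ) / (Fintype.card C : ℝ) := by
  set K := Submodule.span ℂ (Set.range φ)
  have : FiniteDimensional ℂ K := FiniteDimensional.span_of_finite ℂ (Set.finite_range φ)
  have hφK (c : C) : φ c ∈ K := Submodule.subset_span (Set.mem_range_self c)
  have bound : ∑ c, ‖(inner ℂ (e c) (φ c) : ℂ)‖ ^ 2 ≤ finrank ℂ K := by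
    refine le_trans (Finset.sum_le_sum fun c _ => ?_)
      (he.sum_sq_norm_orthogonalProjectionOnto_le_finrank K)
    have := K.norm_inner_le_norm_orthogonalProjectionOnto_mul_norm (e c) ⟨φ c, hφK c⟩
    rw [show ‖(⟨φ c, hφK c⟩ : K)‖ = 1 from hφ c, mul_one] at this
    gcongr
  exact ⟨bound, div_le_div_of_nonneg_right bound (Nat.cast_nonneg _)⟩
end

section
/- Let F be a finite field with q elements, let N ≥ 1 and k ≥ 1 be integers, let X ⊆ F^N be a nonempty set, and for an integer m ≥ 1 define R_m = {Σ_{i=1}^m y_i v_i : y₁,…,y_m ∈ F, v₁,…,v_m ∈ X}. If R_{2k} ≠ F^N, then card R_k ≤ (q^N − 1)/(q − 1). -/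
/-! Every `R m` is a cone (stable under scalars) and `R k + R k ⊆ R (2k)`. Pick `v ∉ R (2k)`.
If two points of `R k` differed by a nonzero multiple `t • v`, then `v` would be a sum of two points
of `R k`, so `R k` injects into `F^N ⧸ F ∙ v`. Unless `R k` is empty it contains `0`, so
`v ≠ 0`, the quotient has `q^(N-1)` elements, and `q^(N-1) ≤ (q^N - 1)/(q - 1)`. -/

open scoped Pointwise

def combinationsOfLength {K V : Type*} [Semiring K] [AddCommMonoid V] [Module K V]
    (X : Set V) (m : ℕ) : Set V :=
  {z | ∃ (y : Fin m → K) (v : Fin m → V), (∀ i, v i ∈ X) ∧ z = ∑ i, y i • v i}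

namespace combinationsOfLength

variable {K V : Type*} [Semiring K] [AddCommMonoid V] [Module K V] {X : Set V}

theorem smul_mem {m : ℕ} (t : K) {z : V} (hz : z ∈ combinationsOfLength (K := K) X m) :
    t • z ∈ combinationsOfLength (K := K) X m := by
  obtain ⟨y, v, hv, rfl⟩ := hz
  exact ⟨t • y, v, hv, by simp [Finset.smul_sum, smul_smul]⟩

theorem add_mem {m n : ℕ} {a b : V} (ha : a ∈ combinationsOfLength (K := K) X m)
    (hb : b ∈ combinationsOfLength (K := K) X n) :
    a + b ∈ combinationsOfLength (K := K) X (m + n) := by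
  obtain ⟨y, v, hv, rfl⟩ := ha
  obtain ⟨y', v', hv', rfl⟩ := hb
  refine ⟨Fin.append y y', Fin.append v v', Fin.addCases (by simpa using hv) (by simpa using hv'),
    ?_⟩
  simp [Fin.sum_univ_add]

theorem add_subset (m n : ℕ) :
    combinationsOfLength (K := K) X m + combinationsOfLength (K := K) X n ⊆
      combinationsOfLength (K := K) X (m + n) := by
  rintro _ ⟨a, ha, b, hb, rfl⟩
  exact add_mem ha hb

end combinationsOfLength

section Cone

variable {K V : Type*} [Field K] [AddCommGroup V] [Module K V] {C : Set V}

theorem injOn_mkQ_span_singleton (hC : ∀ (t : K) (c : V), c ∈ C → t • c ∈ C) {v : V}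
    (hv : v ∉ C + C) : Set.InjOn (K ∙ v).mkQ C := by
  intro c₁ hc₁ c₂ hc₂ h
  obtain ⟨t, ht⟩ := Submodule.mem_span_singleton.mp ((Submodule.Quotient.eq _).mp h)
  rcases eq_or_ne t 0 with rfl | ht0
  · rwa [zero_smul, eq_comm, sub_eq_zero] at ht
  · refine absurd ?_ hv
    have hv_eq : v = t⁻¹ • c₁ + (-t⁻¹) • c₂ := by
      rw [neg_smul, ← sub_eq_add_neg, ← smul_sub, ← ht, smul_smul, inv_mul_cancel₀ ht0, one_smul]
    exact hv_eq ▸ Set.add_mem_add (hC _ _ hc₁) (hC _ _ hc₂)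

theorem card_cone_mul_card_le [Finite V] (hC : ∀ (t : K) (c : V), c ∈ C → t • c ∈ C)
    (hCC : C + C ≠ Set.univ) : Nat.card C * Nat.card K ≤ Nat.card V := by
  rcases C.eq_empty_or_nonempty with rfl | ⟨c, hc⟩
  · simp
  obtain ⟨v, hv⟩ := (Set.ne_univ_iff_exists_notMem _).mp hCC
  have hv0 : v ≠ 0 := by
    rintro rfl
    have h0 : (0 : V) ∈ C := zero_smul K c ▸ hC 0 c hc
    exact hv (by simpa using Set.add_mem_add h0 h0)
  have : Finite (V ⧸ K ∙ v) := .of_surjective _ (Submodule.mkQ_surjective _)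
  have hC_le : Nat.card C ≤ Nat.card (V ⧸ K ∙ v) :=
    Nat.card_le_card_of_injective _ (Set.injOn_iff_injective.mp (injOn_mkQ_span_singleton hC hv))
  rw [Submodule.card_eq_card_quotient_mul_card (K ∙ v),
    ← Nat.card_congr (LinearEquiv.toSpanNonzeroSingleton K V v hv0).toEquiv, mul_comm]
  gcongr

end Cone

theorem Nat.le_sub_one_div_sub_one_of_mul_le {c q M : ℕ} (hq : 2 ≤ q) (h : c * q ≤ M) :
    c ≤ (M - 1) / (q - 1) := by
  rw [Nat.le_div_iff_mul_le (by omega), Nat.mul_sub_one]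
  rcases Nat.eq_zero_or_pos c with rfl | hc
  · simp
  · have : c ≤ c * q := Nat.le_mul_of_pos_right c (by omega)
    omega

theorem stmt_15_general (F : Type*) [Field F] [Fintype F] (N k : ℕ)
    (X : Set (Fin N → F))
    (R : ℕ → Set (Fin N → F))
    (hR : ∀ m, R m = {z | ∃ (y : Fin m → F) (v : Fin m → Fin N → F),
      (∀ i, v i ∈ X) ∧ z = ∑ i, y i • v i})
    (h2k : R (2 * k) ≠ Set.univ) :
    Nat.card (R k) ≤ (Fintype.card F ^ N - 1) / (Fintype.card F - 1) := by
  have hR' : R = combinationsOfLength (K := F) X := funext hR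
  have hRR : R k + R k ≠ Set.univ := by
    rw [hR'] at h2k ⊢
    refine fun h ↦ h2k (Set.univ_subset_iff.mp ?_)
    exact two_mul k ▸ h ▸ combinationsOfLength.add_subset k k
  have hcard := card_cone_mul_card_le (fun t _ ↦ hR' ▸ combinationsOfLength.smul_mem t) hRR
  rw [Nat.card_fun, Nat.card_fin, Nat.card_eq_fintype_card (α := F)] at hcard
  exact Nat.le_sub_one_div_sub_one_of_mul_le Fintype.one_lt_card hcard

/-- Let `F` be a finite field with `q` elements, `N, k ≥ 1`, `X ⊆ F^N` nonempty, and for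
`m ≥ 1` let `R_m = {Σ_{i=1}^m y_i v_i : y_i ∈ F, v_i ∈ X}`.  If `R_{2k} ≠ F^N`, then
`card R_k ≤ (q^N - 1)/(q - 1)`. -/
theorem stmt_15 (F : Type*) [Field F] [Fintype F] (N k : ℕ) (hN : 1 ≤ N) (hk : 1 ≤ k)
    (X : Set (Fin N → F)) (hX : X.Nonempty)
    (R : ℕ → Set (Fin N → F))
    (hR : ∀ m, R m = {z | ∃ (y : Fin m → F) (v : Fin m → Fin N → F),
      (∀ i, v i ∈ X) ∧ z = ∑ i, y i • v i})
    (h2k : R (2 * k) ≠ Set.univ) :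
    Nat.card (R k) ≤ (Fintype.card F ^ N - 1) / (Fintype.card F - 1) :=
  stmt_15_general F N k X R hR h2k
end
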